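/- arXiv:2308.12865 — 2 statements merged into one kernel-verified Lean document; each statement's English description precedes it below -/
import Mathlib

section
/- For m ≥ n ≥ 1, the stiffness matrix entry S_{mn} = ∫_{−1}^{1} φ_n'(ξ)φ_m'(ξ) dξ equals (1/4)·√((2m+1)(2n+1))·n(n+1)·(1+(−1)^{m+n}). -/
open Polynomial

/-- The Legendre polynomial of degree `n` (Rodrigues formula). -/
noncomputable def legendre (n : ℕ) : Polynomial ℝ :=
  C ((1 : ℝ) / (2 ^ n * n.factorial)) * derivative^[n] ((X ^ 2 - 1) ^ n)

/-- The normalized Legendre function `φ_m(ξ) = √((2m+1)/2) L_m(ξ)`. -/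
noncomputable def phiF (m : ℕ) (x : ℝ) : ℝ :=
  Real.sqrt ((2 * (m : ℝ) + 1) / 2) * (legendre m).eval x

open Finset


lemma poly_intable (P : Polynomial ℝ) :
    IntervalIntegrable (fun x => P.eval x) MeasureTheory.volume (-1 : ℝ) 1 :=
  P.continuous.intervalIntegrable _ _

lemma poly_ftc (P : Polynomial ℝ) :
    ∫ x in (-1 : ℝ)..1, (P.derivative).eval x = P.eval 1 - P.eval (-1) := by
  apply intervalIntegral.integral_deriv_eq_sub' (fun x => P.eval x)
  · funext x; exact P.deriv
  · intro x _; exact P.differentiableAt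
  · exact (P.derivative).continuous.continuousOn

lemma poly_parts (a b : Polynomial ℝ) :
    ∫ x in (-1 : ℝ)..1, (a.eval x * b.derivative.eval x) =
      ((a * b).eval 1 - (a * b).eval (-1)) - ∫ x in (-1 : ℝ)..1, (a.derivative.eval x * b.eval x) := by
  have h := poly_ftc (a * b)
  rw [derivative_mul] at h
  have h2 : ∫ x in (-1 : ℝ)..1, ((a.derivative * b + a * b.derivative).eval x) =
      (∫ x in (-1 : ℝ)..1, a.derivative.eval x * b.eval x)
        + ∫ x in (-1 : ℝ)..1, a.eval x * b.derivative.eval x := by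
    simp only [eval_add, eval_mul]
    exact intervalIntegral.integral_add
      ((a.derivative.continuous.mul b.continuous).intervalIntegrable _ _)
      ((a.continuous.mul b.derivative.continuous).intervalIntegrable _ _)
  rw [h2] at h
  linarith


lemma rodrigues_factor (m d : ℕ) (hd : d ≤ m) :
    ∃ g : Polynomial ℝ, derivative^[d] (((X : Polynomial ℝ) ^ 2 - 1) ^ m) =
      ((X : Polynomial ℝ) ^ 2 - 1) ^ (m - d) * g := by
  induction d with
  | zero => exact ⟨1, by simp⟩
  | succ d ih =>
    obtain ⟨g, hg⟩ := ih (Nat.le_of_succ_le hd)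
    refine ⟨(2 * (m - d : ℕ)) • (X * g) + ((X : Polynomial ℝ) ^ 2 - 1) * derivative g, ?_⟩
    rw [Function.iterate_succ_apply', hg, derivative_mul, derivative_pow]
    have h1 : m - d = (m - (d + 1)) + 1 := by omega
    rw [h1]
    have h2 : derivative ((X : Polynomial ℝ) ^ 2 - 1) = 2 * X := by
      simp [derivative_sub, derivative_pow, map_ofNat]
    rw [h2]
    simp only [nsmul_eq_mul, pow_succ, Polynomial.C_eq_natCast, map_add, map_one, map_natCast]
    push_cast
    ring

lemma rodrigues_eval_zero (m d : ℕ) (hd : d < m) (x : ℝ) (hx : x ^ 2 = 1) :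
    (derivative^[d] (((X : Polynomial ℝ) ^ 2 - 1) ^ m)).eval x = 0 := by
  obtain ⟨g, hg⟩ := rodrigues_factor m d (le_of_lt hd)
  rw [hg, eval_mul, eval_pow, eval_sub, eval_pow, eval_one, eval_X, hx, sub_self,
    zero_pow (by omega), zero_mul]

lemma ortho_aux (m : ℕ) (q : Polynomial ℝ) (hq : q.natDegree < m) :
    ∀ d, d ≤ m → (∫ x in (-1 : ℝ)..1,
      (derivative^[m - d] q).eval x *
        (derivative^[d] (((X : Polynomial ℝ) ^ 2 - 1) ^ m)).eval x) = 0 := by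
  intro d
  induction d with
  | zero =>
    intro _
    rw [Nat.sub_zero, iterate_derivative_eq_zero hq]
    simp
  | succ d ih =>
    intro hdm
    have hd : d < m := hdm
    have key : derivative^[d + 1] (((X : Polynomial ℝ) ^ 2 - 1) ^ m) =
        (derivative^[d] (((X : Polynomial ℝ) ^ 2 - 1) ^ m)).derivative :=
      Function.iterate_succ_apply' _ _ _
    rw [key, poly_parts]
    have hb1 : (derivative^[d] (((X : Polynomial ℝ) ^ 2 - 1) ^ m)).eval 1 = 0 :=
      rodrigues_eval_zero m d hd 1 (by norm_num)
    have hb2 : (derivative^[d] (((X : Polynomial ℝ) ^ 2 - 1) ^ m)).eval (-1) = 0 :=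
      rodrigues_eval_zero m d hd (-1) (by norm_num)
    have hder : (derivative^[m - (d + 1)] q).derivative = derivative^[m - d] q := by
      have : m - d = (m - (d + 1)) + 1 := by omega
      rw [this, Function.iterate_succ_apply']
    rw [eval_mul, eval_mul, hb1, hb2, hder, ih (le_of_lt hd)]
    ring


lemma f_factor (n : ℕ) : (((X : Polynomial ℝ) ^ 2 - 1)) ^ n =
    ((X : Polynomial ℝ) - C 1) ^ n * ((X : Polynomial ℝ) + C 1) ^ n := by
  rw [← mul_pow]; congr 1; simp [C_1]; ring

lemma leib (n N : ℕ) (x : ℝ) :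
    (derivative^[N] (((X : Polynomial ℝ) ^ 2 - 1) ^ n)).eval x =
      ∑ k ∈ Finset.range (N + 1), (N.choose k : ℝ) *
        ((n.descFactorial (N - k) : ℝ) * (x - 1) ^ (n - (N - k)) *
          ((n.descFactorial k : ℝ) * (x + 1) ^ (n - k))) := by
  rw [f_factor, Polynomial.iterate_derivative_mul, eval_finset_sum]
  refine Finset.sum_congr rfl fun k _ => ?_
  rw [iterate_derivative_X_sub_pow, iterate_derivative_X_add_pow]
  simp [eval_smul, smul_eq_mul, eval_pow, eval_sub, eval_add, eval_X, eval_one,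
    nsmul_eq_mul]

lemma eval_Dn_one (n : ℕ) :
    (derivative^[n] (((X : Polynomial ℝ) ^ 2 - 1) ^ n)).eval 1 =
      (n.factorial : ℝ) * 2 ^ n := by
  rw [leib, Finset.sum_eq_single 0]
  · simp [Nat.descFactorial_self]; norm_num
  · intro k hk hk0
    have hk' : k ≤ n := by simp at hk; omega
    have h1 : n - (n - k) = k := by omega
    have h0 : ((1 : ℝ) - 1) = 0 := by norm_num
    rw [h1, h0, zero_pow hk0]
    ring
  · simp

lemma eval_Dn_negone (n : ℕ) :
    (derivative^[n] (((X : Polynomial ℝ) ^ 2 - 1) ^ n)).eval (-1) =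
      (n.factorial : ℝ) * (-2) ^ n := by
  rw [leib, Finset.sum_eq_single n]
  · simp [Nat.descFactorial_self]
    norm_num; ring
  · intro k hk hkn
    have hk' : k ≤ n := by simp at hk; omega
    have h0 : ((-1 : ℝ) + 1) = 0 := by norm_num
    rw [h0, zero_pow (by omega : n - k ≠ 0)]
    ring
  · simp

lemma eval_Dn1_one (n : ℕ) (hn : 1 ≤ n) :
    (derivative^[n + 1] (((X : Polynomial ℝ) ^ 2 - 1) ^ n)).eval 1 =
      ((n : ℝ) + 1) * (n.factorial : ℝ) * n * 2 ^ (n - 1) := by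
  rw [leib, Finset.sum_eq_single 1]
  · have h1 : n + 1 - 1 = n := by omega
    have h2 : n - (n + 1 - 1) = 0 := by omega
    rw [h2, h1]
    simp [Nat.descFactorial_self]
    norm_num
    ring
  · intro k hk hk1
    have hk' : k ≤ n + 1 := by simp at hk; omega
    rcases Nat.eq_zero_or_pos k with hk0 | hkpos
    · subst hk0
      have : n.descFactorial (n + 1 - 0) = 0 :=
        Nat.descFactorial_eq_zero_iff_lt.mpr (by omega)
      rw [this]; push_cast; ring
    · -- k ≥ 2
      have h2 : n - (n + 1 - k) = k - 1 := by omega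
      have h0 : ((1 : ℝ) - 1) = 0 := by norm_num
      rw [h2, h0, zero_pow (by omega : k - 1 ≠ 0)]
      ring
  · simp

lemma eval_Dn1_negone (n : ℕ) (hn : 1 ≤ n) :
    (derivative^[n + 1] (((X : Polynomial ℝ) ^ 2 - 1) ^ n)).eval (-1) =
      ((n : ℝ) + 1) * (n.factorial : ℝ) * n * (-2) ^ (n - 1) := by
  rw [leib, Finset.sum_eq_single n]
  · have h1 : n + 1 - n = 1 := by omega
    have h2 : n - (n + 1 - n) = n - 1 := by omega
    rw [h2, h1]
    have hc : (n + 1).choose n = n + 1 := by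
      rw [← Nat.choose_symm (by omega : n ≤ n + 1)]; norm_num
    simp [Nat.descFactorial_self, hc]
    push_cast; ring
  · intro k hk hkn
    have hk' : k ≤ n + 1 := by simp at hk; omega
    rcases Nat.lt_or_ge k n with hlt | hge
    · have h0 : ((-1 : ℝ) + 1) = 0 := by norm_num
      rw [h0, zero_pow (by omega : n - k ≠ 0)]
      ring
    · -- k = n + 1
      have hk1 : k = n + 1 := by omega
      subst hk1
      have : n.descFactorial (n + 1) = 0 :=
        Nat.descFactorial_eq_zero_iff_lt.mpr (by omega)
      rw [this]; push_cast; ring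
  intro h; simp at h


lemma fact2_ne (n : ℕ) : ((2 : ℝ) ^ n * n.factorial) ≠ 0 := by
  positivity

lemma legendre_eval_one (n : ℕ) : (legendre n).eval 1 = 1 := by
  rw [legendre, eval_mul, eval_C, eval_Dn_one]
  field_simp

lemma legendre_eval_negone (n : ℕ) : (legendre n).eval (-1) = (-1) ^ n := by
  rw [legendre, eval_mul, eval_C, eval_Dn_negone]
  have : ((-2 : ℝ)) ^ n = (-1) ^ n * 2 ^ n := by
    rw [← neg_one_mul, mul_pow]
  rw [this]
  field_simp

lemma legendre_derivative (n : ℕ) : (legendre n).derivative =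
    C ((1 : ℝ) / (2 ^ n * n.factorial)) * derivative^[n + 1] ((X ^ 2 - 1) ^ n) := by
  rw [legendre, derivative_C_mul, Function.iterate_succ_apply']

lemma legendre_deriv_eval_one (n : ℕ) (hn : 1 ≤ n) :
    ((legendre n).derivative).eval 1 = (n : ℝ) * ((n : ℝ) + 1) / 2 := by
  rw [legendre_derivative, eval_mul, eval_C, eval_Dn1_one n hn]
  have h2 : (2 : ℝ) ^ n = 2 ^ (n - 1) * 2 := by
    rw [← pow_succ]; congr 1; omega
  rw [h2]
  have := Nat.factorial_pos n
  have hf : (n.factorial : ℝ) ≠ 0 := by positivity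
  field_simp

lemma legendre_deriv_eval_negone (n : ℕ) (hn : 1 ≤ n) :
    ((legendre n).derivative).eval (-1) = -((-1) ^ n) * ((n : ℝ) * ((n : ℝ) + 1) / 2) := by
  rw [legendre_derivative, eval_mul, eval_C, eval_Dn1_negone n hn]
  have hneg : ((-2 : ℝ)) ^ (n - 1) = (-1) ^ (n - 1) * 2 ^ (n - 1) := by
    rw [← neg_one_mul, mul_pow]
  have h2 : (2 : ℝ) ^ n = 2 ^ (n - 1) * 2 := by
    rw [← pow_succ]; congr 1; omega
  have hsgn : ((-1 : ℝ)) ^ (n - 1) = -((-1) ^ n) := by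
    have : n = (n - 1) + 1 := by omega
    rw [this, pow_succ]
    simp
  rw [hneg, h2, hsgn]
  have hf : (n.factorial : ℝ) ≠ 0 := by positivity
  field_simp

lemma ortho (m : ℕ) (q : Polynomial ℝ) (hq : q.natDegree < m) :
    ∫ x in (-1 : ℝ)..1, q.eval x * (legendre m).eval x = 0 := by
  have h := ortho_aux m q hq m le_rfl
  rw [Nat.sub_self] at h
  simp only [Function.iterate_zero_apply] at h
  have : ∀ x : ℝ, q.eval x * (legendre m).eval x =
      ((1 : ℝ) / (2 ^ m * m.factorial)) *
        (q.eval x * (derivative^[m] (((X : Polynomial ℝ) ^ 2 - 1) ^ m)).eval x) := by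
    intro x
    rw [legendre, eval_mul, eval_C]
    ring
  rw [intervalIntegral.integral_congr (fun x _ => this x),
    intervalIntegral.integral_const_mul, h, mul_zero]

lemma legendre_natDegree_le (n : ℕ) : (legendre n).natDegree ≤ n := by
  rw [legendre]
  refine (natDegree_C_mul_le _ _).trans ?_
  refine (natDegree_iterate_derivative _ _).trans ?_
  have h1 : (((X : Polynomial ℝ) ^ 2 - 1) ^ n).natDegree ≤ 2 * n := by
    refine (natDegree_pow_le).trans ?_
    have : ((X : Polynomial ℝ) ^ 2 - 1).natDegree ≤ 2 := by
      refine (natDegree_sub_le _ _).trans ?_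
      simp
    calc n * ((X : Polynomial ℝ) ^ 2 - 1).natDegree ≤ n * 2 := by
          exact Nat.mul_le_mul_left n this
      _ = 2 * n := by ring
  omega

lemma sqrt_combine (m n : ℕ) :
    Real.sqrt ((2 * (n : ℝ) + 1) / 2) * Real.sqrt ((2 * (m : ℝ) + 1) / 2) =
      Real.sqrt ((2 * (m : ℝ) + 1) * (2 * (n : ℝ) + 1)) / 2 := by
  rw [← Real.sqrt_mul (by positivity)]
  have h : (2 * (n : ℝ) + 1) / 2 * ((2 * (m : ℝ) + 1) / 2) =
      ((2 * (m : ℝ) + 1) * (2 * (n : ℝ) + 1)) / 4 := by ring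
  rw [h, Real.sqrt_div (by positivity)]
  rw [show (4 : ℝ) = 2 ^ 2 by norm_num, Real.sqrt_sq (by norm_num : (0:ℝ) ≤ 2)]

/-- For `m ≥ n ≥ 1`, the stiffness matrix entry
`S_{mn} = ∫_{−1}^{1} φ_n'(ξ) φ_m'(ξ) dξ = (1/4)√((2m+1)(2n+1)) n(n+1)(1+(−1)^{m+n})`. -/
theorem stiffness_matrix_entries (m n : ℕ) (hn : 1 ≤ n) (hmn : n ≤ m) :
    ∫ x in (-1 : ℝ)..1, deriv (phiF n) x * deriv (phiF m) x =
      1 / 4 * Real.sqrt ((2 * (m : ℝ) + 1) * (2 * (n : ℝ) + 1)) *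
        ((n : ℝ) * ((n : ℝ) + 1)) * (1 + (-1 : ℝ) ^ (m + n)) := by
  set cn := Real.sqrt ((2 * (n : ℝ) + 1) / 2) with hcn
  set cm := Real.sqrt ((2 * (m : ℝ) + 1) / 2) with hcm
  have hderiv : ∀ (k : ℕ) (x : ℝ), deriv (phiF k) x =
      Real.sqrt ((2 * (k : ℝ) + 1) / 2) * ((legendre k).derivative).eval x := by
    intro k x
    have : phiF k = fun y => Real.sqrt ((2 * (k : ℝ) + 1) / 2) * (legendre k).eval y := rfl
    rw [this, deriv_const_mul _ ((legendre k).differentiableAt), Polynomial.deriv]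
  have hcongr : ∀ x : ℝ, deriv (phiF n) x * deriv (phiF m) x =
      (cn * cm) * (((legendre n).derivative).eval x * ((legendre m).derivative).eval x) := by
    intro x; rw [hderiv, hderiv]; ring
  rw [intervalIntegral.integral_congr (fun x _ => hcongr x),
    intervalIntegral.integral_const_mul]
  -- integration by parts
  have hparts := poly_parts (legendre n).derivative (legendre m)
  have hzero : ∫ x in (-1 : ℝ)..1,
      ((legendre n).derivative.derivative.eval x * (legendre m).eval x) = 0 := by
    apply ortho
    have h1 := natDegree_derivative_le (legendre n).derivative
    have h2 := natDegree_derivative_le (legendre n)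
    have h3 := legendre_natDegree_le n
    omega
  rw [hzero, sub_zero] at hparts
  rw [hparts, eval_mul, eval_mul, legendre_eval_one, legendre_eval_negone,
    legendre_deriv_eval_one n hn, legendre_deriv_eval_negone n hn]
  have hs := sqrt_combine m n
  rw [← hcn, ← hcm] at hs
  have hpow : ((-1 : ℝ)) ^ n * (-1 : ℝ) ^ m = (-1 : ℝ) ^ (m + n) := by
    rw [← pow_add]; ring_nf
  rw [hs, ← hpow]
  ring
end

section
/- Let M be a symmetric positive definite (N−1)×(N−1) matrix with eigendecomposition M = E D Eᵀ where E is orthogonal and D = diag(d₁,…,d_{N−1}) with d_i > 0. For κ real and a given matrix F, suppose (d_i/d_j + d_j/d_i + 2) + κ(d_i + d_j) ≠ 0 for all i,j. Then the matrix equation M^{−1}UM + 2U + MUM^{−1} + κ(MU + UM) = F has the unique solution U = E V Eᵀ where V_{ij} = (EᵀFE)_{ij} / ((d_i/d_j + d_j/d_i + 2) + κ(d_i + d_j)). -/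
open Matrix

/-!
Conjugating by the orthogonal matrix `E` diagonalizes `M`, and for diagonal `M` the operator
`U ↦ M⁻¹UM + 2U + MUM⁻¹ + κ(MU + UM)` acts entrywise, multiplying each entry by a nonvanishing
symbol. In the eigenbasis the equation is therefore solved, uniquely, by entrywise division.
-/

namespace Matrix

variable {n K : Type*} [Field K]

lemma hadamard_eq_iff {m : Type*} {c : Matrix m n K} (hc : ∀ i j, c i j ≠ 0) (W G : Matrix m n K) :
    c ⊙ W = G ↔ W = of fun i j => G i j / c i j := by
  simp only [← Matrix.ext_iff, hadamard_apply, of_apply]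
  exact forall₂_congr fun i j => by rw [eq_div_iff (hc i j), mul_comm]

variable [Fintype n] [DecidableEq n]

noncomputable def auxOperator (M : Matrix n n K) (κ : K) (U : Matrix n n K) : Matrix n n K :=
  M⁻¹ * U * M + 2 • U + M * U * M⁻¹ + κ • (M * U + U * M)

def auxSymbol (d : n → K) (κ : K) : Matrix n n K :=
  of fun i j => (d i / d j + d j / d i + 2) + κ * (d i + d j)

section Conjugation

variable {P Q : Matrix n n K}

lemma conj_mul_conj (hQP : Q * P = 1) (A B : Matrix n n K) :
    (P * A * Q) * (P * B * Q) = P * (A * B) * Q := by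
  calc (P * A * Q) * (P * B * Q) = P * (A * ((Q * P) * (B * Q))) := by
        simp only [Matrix.mul_assoc]
    _ = P * (A * B) * Q := by rw [hQP]; simp only [Matrix.one_mul, Matrix.mul_assoc]

lemma inv_conj (hQP : Q * P = 1) (M : Matrix n n K) : (P * M * Q)⁻¹ = P * M⁻¹ * Q := by
  rw [Matrix.mul_inv_rev, Matrix.mul_inv_rev, inv_eq_left_inv hQP, inv_eq_right_inv hQP,
    Matrix.mul_assoc]

lemma conj_eq_iff (hQP : Q * P = 1) (X Y : Matrix n n K) : P * X * Q = Y ↔ X = Q * Y * P := by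
  have hPQ : P * Q = 1 := mul_eq_one_comm.mp hQP
  constructor <;> rintro rfl <;> simp only [← Matrix.mul_assoc, hQP, hPQ, Matrix.one_mul] <;>
    simp only [Matrix.mul_assoc, hQP, hPQ, Matrix.mul_one]

lemma conj_inj (hQP : Q * P = 1) {X Y : Matrix n n K} : P * X * Q = P * Y * Q ↔ X = Y := by
  rw [conj_eq_iff hQP, ← (conj_eq_iff hQP Y _).mp rfl]

lemma auxOperator_conj (hQP : Q * P = 1) (M : Matrix n n K) (κ : K) (W : Matrix n n K) :
    auxOperator (P * M * Q) κ (P * W * Q) = P * auxOperator M κ W * Q := by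
  simp only [auxOperator, inv_conj hQP, conj_mul_conj hQP, Matrix.mul_add, Matrix.add_mul,
    Matrix.mul_smul, Matrix.smul_mul]

end Conjugation

variable {d : n → K}

lemma auxOperator_diagonal (hd : ∀ i, d i ≠ 0) (κ : K) (W : Matrix n n K) :
    auxOperator (diagonal d) κ W = auxSymbol d κ ⊙ W := by
  have hinv : (diagonal d)⁻¹ = diagonal d⁻¹ := by
    refine inv_eq_right_inv ?_
    rw [diagonal_mul_diagonal, ← diagonal_one]
    exact congrArg diagonal (funext fun i => mul_inv_cancel₀ (hd i))
  ext i j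
  simp only [auxOperator, auxSymbol, hinv, add_apply, smul_apply, mul_diagonal, diagonal_mul,
    hadamard_apply, of_apply, Pi.inv_apply, smul_eq_mul, two_nsmul]
  field_simp [hd i, hd j]
  ring

lemma auxOperator_conj_diagonal_eq_iff {P Q : Matrix n n K} (hQP : Q * P = 1)
    (hd : ∀ i, d i ≠ 0) {κ : K} (hden : ∀ i j, auxSymbol d κ i j ≠ 0) (U F : Matrix n n K) :
    auxOperator (P * diagonal d * Q) κ U = F ↔
      U = P * (of fun i j => (Q * F * P) i j / auxSymbol d κ i j) * Q := by
  obtain ⟨W, rfl⟩ : ∃ W, U = P * W * Q := ⟨Q * U * P, ((conj_eq_iff hQP _ _).mpr rfl).symm⟩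
  rw [auxOperator_conj hQP, auxOperator_diagonal hd, conj_eq_iff hQP, hadamard_eq_iff hden,
    conj_inj hQP]

end Matrix

/-- For a symmetric positive definite matrix `M = E D Eᵀ` (with `E` orthogonal and
`D = diag(d)`, `d i > 0`), if all denominators `(d_i/d_j + d_j/d_i + 2) + κ(d_i + d_j)`
are nonzero, then the matrix equation
`M⁻¹UM + 2U + MUM⁻¹ + κ(MU + UM) = F` has the unique solution `U = E V Eᵀ` with
`V_{ij} = (EᵀFE)_{ij} / ((d_i/d_j + d_j/d_i + 2) + κ(d_i + d_j))`. -/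
theorem auxiliary_problem_unique_solution (N : ℕ)
    (E D M F : Matrix (Fin (N - 1)) (Fin (N - 1)) ℝ) (d : Fin (N - 1) → ℝ) (κ : ℝ)
    (hE : Eᵀ * E = 1) (hD : D = Matrix.diagonal d) (hd : ∀ i, 0 < d i)
    (hM : M = E * D * Eᵀ)
    (hden : ∀ i j, (d i / d j + d j / d i + 2) + κ * (d i + d j) ≠ 0) :
    ∀ V : Matrix (Fin (N - 1)) (Fin (N - 1)) ℝ,
      (V = Matrix.of fun i j =>
        (Eᵀ * F * E) i j / ((d i / d j + d j / d i + 2) + κ * (d i + d j))) →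
      (M⁻¹ * (E * V * Eᵀ) * M + 2 • (E * V * Eᵀ) + M * (E * V * Eᵀ) * M⁻¹ +
          κ • (M * (E * V * Eᵀ) + (E * V * Eᵀ) * M) = F) ∧
      ∀ U : Matrix (Fin (N - 1)) (Fin (N - 1)) ℝ,
        M⁻¹ * U * M + 2 • U + M * U * M⁻¹ + κ • (M * U + U * M) = F →
        U = E * V * Eᵀ := by
  rintro V rfl
  subst hM hD
  have hsolve := auxOperator_conj_diagonal_eq_iff hE (fun i => (hd i).ne') (κ := κ) hden
  exact ⟨(hsolve _ F).mpr rfl, fun U hU => (hsolve U F).mp hU⟩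
end
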